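/- Let Ω ⊂ ℂⁿ be a bounded domain with C¹-boundary, and let q, r satisfy 1 ≤ q < ∞, 1 < r < ∞, and q(2n − 1) < 2nr. Then there exists a constant δ = δ(Ω, n, q, r) > 0 such that δ·‖B_{∂Ω} f‖_{L^q(Ω)} ≤ ‖f‖_{L^r(∂Ω)} for every f ∈ C⁰(Ω̄), where B_{∂Ω} f(z) := ∫_{∂Ω} (ξ̄₁ − z̄₁)·f(ξ)/|ξ − z|^{2n} dS(ξ) for z ∈ Ω. -/

import Mathlib

open MeasureTheory Metric Set
open scoped ENNReal NNReal

noncomputable section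

/-- We identify `ℂⁿ` with `ℝ^{2n}` as a Euclidean space. -/
abbrev Cn (n : ℕ) := EuclideanSpace ℂ (Fin n)

noncomputable instance (n : ℕ) : MeasurableSpace (Cn n) := borel _
instance (n : ℕ) : BorelSpace (Cn n) := ⟨rfl⟩

/-- The Wirtinger derivative `∂f/∂z̄ⱼ` of `f : ℂⁿ → ℂ`, computed from the real
Fréchet derivative. -/
def dbar {n : ℕ} (f : Cn n → ℂ) (z : Cn n) (j : Fin n) : ℂ :=
  (1 / 2 : ℂ) * (fderiv ℝ f z (EuclideanSpace.single j (1 : ℂ))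
    + Complex.I * fderiv ℝ f z (EuclideanSpace.single j Complex.I))

/-- The Wirtinger derivative `∂ρ/∂zⱼ` of a real-valued function `ρ` on `ℂⁿ`. -/
def dz {n : ℕ} (ρ : Cn n → ℝ) (z : Cn n) (j : Fin n) : ℂ :=
  (1 / 2 : ℂ) * ((fderiv ℝ ρ z (EuclideanSpace.single j (1 : ℂ)) : ℂ)
    - Complex.I * (fderiv ℝ ρ z (EuclideanSpace.single j Complex.I) : ℂ))

/-- `|∂̄f|^p = (∑ⱼ |∂f/∂z̄ⱼ|²)^{p/2}` pointwise, as a value in `ℝ≥0∞`. -/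
def dbarNormPow {n : ℕ} (f : Cn n → ℂ) (p : ℝ) (z : Cn n) : ℝ≥0∞ :=
  (∑ j, ((‖dbar f z j‖₊ : ℝ≥0∞) ^ 2)) ^ (p / 2)

/-- `|∇f|^p = (∑ⱼ |∂f/∂xⱼ|²)^{p/2}` for a complex-valued `f` on `ℝⁿ`, in `ℝ≥0∞`. -/
def gradNormPow {n : ℕ} (f : EuclideanSpace ℝ (Fin n) → ℂ) (p : ℝ)
    (x : EuclideanSpace ℝ (Fin n)) : ℝ≥0∞ :=
  (∑ j, ((‖fderiv ℝ f x (EuclideanSpace.single j (1 : ℝ))‖₊ : ℝ≥0∞) ^ 2)) ^ (p / 2)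

/-- `ρ` is a `C¹` boundary defining function for `Ω`:  it is `C¹` on a neighborhood of the
closure of `Ω`, `Ω = {ρ < 0}`, `∂Ω = {ρ = 0}` (within that neighborhood), and `∇ρ ≠ 0`
on `∂Ω`. -/
def IsC1DefiningFunction {E : Type*} [NormedAddCommGroup E] [NormedSpace ℝ E]
    (Ω : Set E) (ρ : E → ℝ) : Prop :=
  ∃ U : Set E, IsOpen U ∧ closure Ω ⊆ U ∧ ContDiffOn ℝ 1 ρ U ∧
    Ω = {x ∈ U | ρ x < 0} ∧ frontier Ω = {x ∈ U | ρ x = 0} ∧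
    ∀ x ∈ frontier Ω, fderiv ℝ ρ x ≠ 0

/-- `Ω` has `C¹` boundary. -/
def HasC1Boundary {E : Type*} [NormedAddCommGroup E] [NormedSpace ℝ E] (Ω : Set E) : Prop :=
  ∃ ρ : E → ℝ, IsC1DefiningFunction Ω ρ

/-- `ρ` is a `C²` boundary defining function for `Ω`. -/
def IsC2DefiningFunction {E : Type*} [NormedAddCommGroup E] [NormedSpace ℝ E]
    (Ω : Set E) (ρ : E → ℝ) : Prop :=
  ∃ U : Set E, IsOpen U ∧ closure Ω ⊆ U ∧ ContDiffOn ℝ 2 ρ U ∧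
    Ω = {x ∈ U | ρ x < 0} ∧ frontier Ω = {x ∈ U | ρ x = 0} ∧
    ∀ x ∈ frontier Ω, fderiv ℝ ρ x ≠ 0

/-- The Laplacian of a real-valued function on `ℂⁿ ≅ ℝ^{2n}`. -/
def lapC {n : ℕ} (ρ : Cn n → ℝ) (z : Cn n) : ℝ :=
  ∑ j, (iteratedFDeriv ℝ 2 ρ z
          ![EuclideanSpace.single j (1 : ℂ), EuclideanSpace.single j (1 : ℂ)]
      + iteratedFDeriv ℝ 2 ρ z
          ![EuclideanSpace.single j Complex.I, EuclideanSpace.single j Complex.I])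

/-- The Laplacian of a real-valued function on `ℝⁿ`. -/
def lapR {n : ℕ} (ρ : EuclideanSpace ℝ (Fin n) → ℝ) (x : EuclideanSpace ℝ (Fin n)) : ℝ :=
  ∑ j, iteratedFDeriv ℝ 2 ρ x
    ![EuclideanSpace.single j (1 : ℝ), EuclideanSpace.single j (1 : ℝ)]

/-- The constant `K = (sup_Ω |∇ρ| + sup_Ω |Δρ|) / inf_{∂Ω} |∇ρ|` for `Ω ⊆ ℂⁿ`. -/
def KconstC {n : ℕ} (Ω : Set (Cn n)) (ρ : Cn n → ℝ) : ℝ :=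
  (sSup ((fun z => ‖fderiv ℝ ρ z‖) '' Ω) + sSup ((fun z => |lapC ρ z|) '' Ω)) /
    sInf ((fun z => ‖fderiv ℝ ρ z‖) '' frontier Ω)

/-- The constant `K = (sup_D |∇ρ| + sup_D |Δρ|) / inf_{∂D} |∇ρ|` for `D ⊆ ℝⁿ`. -/
def KconstR {n : ℕ} (D : Set (EuclideanSpace ℝ (Fin n))) (ρ : EuclideanSpace ℝ (Fin n) → ℝ) : ℝ :=
  (sSup ((fun x => ‖fderiv ℝ ρ x‖) '' D) + sSup ((fun x => |lapR ρ x|) '' D)) /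
    sInf ((fun x => ‖fderiv ℝ ρ x‖) '' frontier D)

/-- The complex Hessian `∂²ρ/∂zⱼ∂z̄ₖ` of a real-valued function `ρ` on `ℂⁿ`. -/
def cHess {n : ℕ} (ρ : Cn n → ℝ) (z : Cn n) (j k : Fin n) : ℂ :=
  (1 / 4 : ℂ) *
    (((iteratedFDeriv ℝ 2 ρ z ![EuclideanSpace.single j (1 : ℂ), EuclideanSpace.single k (1 : ℂ)]
      + iteratedFDeriv ℝ 2 ρ z ![EuclideanSpace.single j Complex.I,
          EuclideanSpace.single k Complex.I] : ℝ) : ℂ)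
    + Complex.I *
      ((iteratedFDeriv ℝ 2 ρ z ![EuclideanSpace.single j (1 : ℂ), EuclideanSpace.single k Complex.I]
        - iteratedFDeriv ℝ 2 ρ z ![EuclideanSpace.single j Complex.I,
            EuclideanSpace.single k (1 : ℂ)] : ℝ) : ℂ))

/-- The (real value of the) Hermitian form `∑_{j,k} A j k • vⱼ • v̄ₖ`. -/
def hermForm {n : ℕ} (A : Fin n → Fin n → ℂ) (v : Fin n → ℂ) : ℝ :=
  (∑ j, ∑ k, A j k * v j * (starRingEnd ℂ) (v k)).re

/-- The smallest eigenvalue of a Hermitian matrix, as the infimum of its Rayleigh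
quotient over unit vectors. -/
def smallestEig {n : ℕ} (A : Fin n → Fin n → ℂ) : ℝ :=
  sInf (hermForm A '' {v : Fin n → ℂ | ∑ j, ‖v j‖ ^ 2 = 1})

/-- `φ` is plurisubharmonic on `s`. -/
def PshOn {n : ℕ} (φ : Cn n → ℝ) (s : Set (Cn n)) : Prop :=
  ∀ z ∈ s, ∀ v : Fin n → ℂ, 0 ≤ hermForm (cHess φ z) v

/-- `φ` is strictly plurisubharmonic on `s`. -/
def StrictPshOn {n : ℕ} (φ : Cn n → ℝ) (s : Set (Cn n)) : Prop :=
  ∀ z ∈ s, ∀ v : Fin n → ℂ, v ≠ 0 → 0 < hermForm (cHess φ z) v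

/-- `Ω` is strictly pseudoconvex with `C²` defining function `ρ`. -/
def IsStrictlyPseudoconvex {n : ℕ} (Ω : Set (Cn n)) (ρ : Cn n → ℝ) : Prop :=
  IsC2DefiningFunction Ω ρ ∧
    ∀ p ∈ frontier Ω, ∀ t : Fin n → ℂ, t ≠ 0 → (∑ j, t j * dz ρ p j) = 0 →
      0 < hermForm (cHess ρ p) t

/-- `exp` of an extended real number, valued in `ℝ≥0∞`. -/
def erealExp (x : EReal) : ℝ≥0∞ :=
  if x = ⊥ then 0 else if x = ⊤ then ⊤ else ENNReal.ofReal (Real.exp x.toReal)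

/-- The `L^q` norm of an `ℝ≥0∞`-valued function (`essSup` when `q = ∞`). -/
def lqNorm {α : Type*} [MeasurableSpace α] (g : α → ℝ≥0∞) (q : ℝ≥0∞) (μ : Measure α) : ℝ≥0∞ :=
  if q = ⊤ then essSup g μ else (∫⁻ x, g x ^ q.toReal ∂μ) ^ (1 / q.toReal)

/-- A test function: smooth and compactly supported inside `Ω`. -/
def IsTestFun {n : ℕ} (Ω : Set (Cn n)) (v : Cn n → ℂ) : Prop :=
  ContDiff ℝ (⊤ : ℕ∞) v ∧ HasCompactSupport v ∧ tsupport v ⊆ Ω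

/-- The `(0,1)`-form with coefficients `f j` is `∂̄`-closed on `Ω` in the sense of
distributions. -/
def DbarClosed {n : ℕ} (Ω : Set (Cn n)) (f : Fin n → Cn n → ℂ) : Prop :=
  ∀ v : Cn n → ℂ, IsTestFun Ω v → ∀ j k : Fin n,
    ∫ z in Ω, (f j z * dbar v z k - f k z * dbar v z j) = 0

/-- `u` solves `∂̄u = f` on `Ω` in the sense of distributions. -/
def DbarSol {n : ℕ} (Ω : Set (Cn n)) (u : Cn n → ℂ) (f : Fin n → Cn n → ℂ) : Prop :=
  ∀ v : Cn n → ℂ, IsTestFun Ω v → ∀ j : Fin n,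
    ∫ z in Ω, u z * dbar v z j = - ∫ z in Ω, f j z * v z

/-- The Laplacian of a real-valued function on `ℂ ≅ ℝ²`. -/
def lap1 (ρ : ℂ → ℝ) (z : ℂ) : ℝ :=
  iteratedFDeriv ℝ 2 ρ z ![(1 : ℂ), (1 : ℂ)] + iteratedFDeriv ℝ 2 ρ z ![Complex.I, Complex.I]

/-- The constant `K = (sup_Ω |∇ρ| + sup_Ω |Δρ|) / inf_{∂Ω} |∇ρ|` for `Ω ⊆ ℂ`. -/
def Kconst1 (Ω : Set ℂ) (ρ : ℂ → ℝ) : ℝ :=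
  (sSup ((fun z => ‖fderiv ℝ ρ z‖) '' Ω) + sSup ((fun z => |lap1 ρ z|) '' Ω)) /
    sInf ((fun z => ‖fderiv ℝ ρ z‖) '' frontier Ω)

end

noncomputable section StmtAux
set_option maxHeartbeats 1000000

lemma coord_le {n : ℕ} (x : Cn n) (i : Fin n) : ‖x i‖ ≤ ‖x‖ := by
  have h1 : ‖x i‖ ^ 2 ≤ ∑ j, ‖x j‖ ^ 2 :=
    Finset.single_le_sum (f := fun j => ‖x j‖ ^ 2) (fun j _ => by positivity)
      (Finset.mem_univ i)
  rw [EuclideanSpace.norm_eq]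
  calc ‖x i‖ = Real.sqrt (‖x i‖ ^ 2) := by rw [Real.sqrt_sq (norm_nonneg _)]
  _ ≤ _ := Real.sqrt_le_sqrt h1

lemma finrank_Cn (n : ℕ) : Module.finrank ℝ (Cn n) = 2 * n := by
  have h := Module.finrank_mul_finrank ℝ ℂ (Cn n)
  rw [Complex.finrank_real_complex, finrank_euclideanSpace, Fintype.card_fin] at h
  omega

lemma submodule_ball_bound {n m : ℕ} (S : Submodule ℝ (Cn n))
    (hS : Module.finrank ℝ S = m) :
    ∃ C : ℝ≥0∞, C ≠ ⊤ ∧ ∀ c₀ R, 0 ≤ R →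
      μH[(m:ℝ)] ((S : Set (Cn n)) ∩ closedBall c₀ R) ≤ C * ENNReal.ofReal R ^ (m:ℝ) := by
  classical
  have hfin : Module.finrank ℝ (Fin m → ℝ) = Module.finrank ℝ S := by
    rw [Module.finrank_pi, Fintype.card_fin, hS]
  obtain ⟨e⟩ : Nonempty ((Fin m → ℝ) ≃L[ℝ] S) :=
    ⟨(LinearEquiv.ofFinrankEq _ _ hfin).toContinuousLinearEquiv⟩
  set φ : (Fin m → ℝ) → Cn n := fun u => (e u : Cn n) with hφ
  obtain ⟨K₁, hK₁⟩ : ∃ K₁ : ℝ≥0, LipschitzWith K₁ φ :=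
    ⟨_, (S.subtypeL.comp (e : (Fin m → ℝ) →L[ℝ] S)).lipschitz⟩
  obtain ⟨K₂, hK₂⟩ : ∃ K₂ : ℝ≥0, LipschitzWith K₂ (e.symm : S → (Fin m → ℝ)) :=
    ⟨_, (e.symm : S →L[ℝ] (Fin m → ℝ)).lipschitz⟩
  refine ⟨(K₁ : ℝ≥0∞) ^ (m:ℕ) * ENNReal.ofReal (2 * (2 * K₂)) ^ (m:ℕ),
    ENNReal.mul_ne_top (ENNReal.pow_ne_top ENNReal.coe_ne_top)
      (ENNReal.pow_ne_top ENNReal.ofReal_ne_top), ?_⟩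
  intro c₀ R hR
  by_cases hc₀ : ((S : Set (Cn n)) ∩ closedBall c₀ R) = ∅
  · simp [hc₀]
  obtain ⟨y₀, hy₀S, hy₀B⟩ := Set.nonempty_iff_ne_empty.2 hc₀
  have key : (S : Set (Cn n)) ∩ closedBall c₀ R ⊆
      φ '' (closedBall (e.symm ⟨y₀, hy₀S⟩) (K₂ * (2 * R))) := by
    rintro y ⟨hyS, hyB⟩
    refine ⟨e.symm ⟨y, hyS⟩, ?_, by simp [hφ]⟩
    rw [mem_closedBall]
    calc dist (e.symm ⟨y, hyS⟩) (e.symm ⟨y₀, hy₀S⟩) ≤ K₂ * dist (⟨y, hyS⟩ : S) ⟨y₀, hy₀S⟩ :=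
          hK₂.dist_le_mul _ _
    _ ≤ K₂ * (2 * R) := by
        refine mul_le_mul_of_nonneg_left ?_ K₂.2
        rw [Subtype.dist_eq]
        calc dist y y₀ ≤ dist y c₀ + dist y₀ c₀ := dist_triangle_right _ _ _
        _ ≤ R + R := add_le_add hyB hy₀B
        _ = 2 * R := by ring
  calc μH[(m:ℝ)] ((S : Set (Cn n)) ∩ closedBall c₀ R)
      ≤ μH[(m:ℝ)] (φ '' (closedBall (e.symm ⟨y₀, hy₀S⟩) (K₂ * (2 * R)))) :=
        measure_mono key
  _ ≤ (K₁ : ℝ≥0∞) ^ (m:ℝ) * μH[(m:ℝ)] (closedBall (e.symm ⟨y₀, hy₀S⟩) (K₂ * (2 * R))) :=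
        hK₁.hausdorffMeasure_image_le (by positivity) _
  _ ≤ _ := by
      have hpi : (μH[(m:ℝ)] : Measure (Fin m → ℝ)) = volume := by
        have := MeasureTheory.hausdorffMeasure_pi_real (ι := Fin m)
        simpa [Fintype.card_fin] using this
      rw [hpi, volume_pi_closedBall _ (by positivity)]
      simp only [Real.volume_closedBall, Finset.prod_const, Finset.card_univ, Fintype.card_fin]
      rw [show (2 * (K₂ * (2 * R)) : ℝ) = (2 * (2 * K₂)) * R by ring]
      rw [ENNReal.ofReal_mul (by positivity), mul_pow, ENNReal.rpow_natCast]
      rw [show ((K₁:ℝ≥0∞) ^ (m:ℕ) * ENNReal.ofReal (2 * (2 * ↑K₂)) ^ (m:ℕ)) *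
        ENNReal.ofReal R ^ (m:ℝ) = (K₁:ℝ≥0∞) ^ (m:ℕ) *
        (ENNReal.ofReal (2 * (2 * ↑K₂)) ^ (m:ℕ) * ENNReal.ofReal R ^ (m:ℝ)) from mul_assoc _ _ _]
      gcongr
      exact le_of_eq (ENNReal.rpow_natCast _ m).symm

lemma local_ahlfors {n : ℕ} (hn : 0 < n) {Ω : Set (Cn n)} {ρ : Cn n → ℝ} {U : Set (Cn n)}
    (hU : IsOpen U) (hρ : ContDiffOn ℝ 1 ρ U)
    (hfr : frontier Ω = {x ∈ U | ρ x = 0})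
    (p : Cn n) (hp : p ∈ frontier Ω) (hg0 : fderiv ℝ ρ p ≠ 0) :
    ∃ s : ℝ, 0 < s ∧ ∃ A : ℝ≥0∞, A ≠ ⊤ ∧ ∀ x₀ : Cn n, ∀ t : ℝ, 0 ≤ t →
      μH[2*(n:ℝ)-1] (frontier Ω ∩ closedBall p (2*s) ∩ closedBall x₀ t) ≤
        A * ENNReal.ofReal t ^ (2*(n:ℝ)-1) := by
  classical
  have hd0 : (0:ℝ) ≤ 2*(n:ℝ)-1 := by
    have : (1:ℝ) ≤ (n:ℝ) := by exact_mod_cast hn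
    linarith
  have hpU : p ∈ U := by rw [hfr] at hp; exact hp.1
  set g : Cn n →L[ℝ] ℝ := fderiv ℝ ρ p with hgdef
  have hc : 0 < ‖g‖ := by simpa [hgdef, norm_pos_iff] using hg0
  set c : ℝ := ‖g‖ with hcdef
  have hcont : ContinuousOn (fderiv ℝ ρ) U :=
    hρ.continuousOn_fderiv_of_isOpen hU le_rfl
  have hca : ContinuousAt (fderiv ℝ ρ) p := hcont.continuousAt (hU.mem_nhds hpU)
  obtain ⟨ε₂, hε₂, hε₂p⟩ := Metric.continuousAt_iff.1 hca (c/4) (by positivity)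
  obtain ⟨ε₁, hε₁, hball⟩ := Metric.isOpen_iff.1 hU p hpU
  set s : ℝ := min ε₁ ε₂ / 3 with hsdef
  have hs : 0 < s := by positivity
  have hcb : closedBall p (2*s) ⊆ ball p (min ε₁ ε₂) := by
    intro z hz
    rw [mem_closedBall] at hz
    rw [mem_ball]
    have hmin : 0 < min ε₁ ε₂ := lt_min hε₁ hε₂
    calc dist z p ≤ 2 * s := hz
    _ < min ε₁ ε₂ := by rw [hsdef]; linarith
  have hcbU : closedBall p (2*s) ⊆ U := fun z hz =>
    hball (mem_ball.2 ((mem_ball.1 (hcb hz)).trans_le (min_le_left _ _)))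
  have hderiv_close : ∀ z ∈ closedBall p (2*s), ‖fderiv ℝ ρ z - g‖ ≤ c/4 := by
    intro z hz
    have h1 : dist z p < ε₂ := (mem_ball.1 (hcb hz)).trans_le (min_le_right _ _)
    have h2 := hε₂p h1
    rw [dist_eq_norm] at h2
    exact h2.le
  have hdiff : ∀ z ∈ closedBall p (2*s), DifferentiableAt ℝ ρ z := fun z hz =>
    (hρ.differentiableOn one_ne_zero).differentiableAt (hU.mem_nhds (hcbU hz))
  -- mean value estimate for ρ - g
  have hmvt : ∀ x ∈ closedBall p (2*s), ∀ y ∈ closedBall p (2*s),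
      ‖(ρ y - g y) - (ρ x - g x)‖ ≤ c/4 * ‖y - x‖ := by
    intro x hx y hy
    refine Convex.norm_image_sub_le_of_norm_fderiv_le (f := fun z => ρ z - g z)
      (fun z hz => (hdiff z hz).sub g.differentiableAt) ?_ (convex_closedBall _ _) hx hy
    intro z hz
    have h1 : fderiv ℝ (fun w => ρ w - g w) z = fderiv ℝ ρ z - g := by
      rw [fderiv_fun_sub (hdiff z hz) g.differentiableAt, g.fderiv]
    rw [h1]
    exact hderiv_close z hz
  -- pick a direction v with g v > c/2
  obtain ⟨v₀, hv₀, hgv₀⟩ := g.exists_lt_apply_of_lt_opNorm (show c/2 < ‖g‖ by linarith)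
  obtain ⟨v, hv1, hv2⟩ : ∃ v : Cn n, ‖v‖ ≤ 1 ∧ c/2 < g v := by
    rcases le_or_gt 0 (g v₀) with h | h
    · exact ⟨v₀, hv₀.le, by rwa [Real.norm_eq_abs, abs_of_nonneg h] at hgv₀⟩
    · refine ⟨-v₀, by simpa using hv₀.le, ?_⟩
      rw [map_neg]
      rwa [Real.norm_eq_abs, abs_of_neg h] at hgv₀
  have hgv : 0 < g v := lt_trans (by positivity) hv2
  set π : Cn n →L[ℝ] Cn n :=
    ContinuousLinearMap.id ℝ (Cn n) - g.smulRight ((g v)⁻¹ • v) with hπdef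
  have hπapply : ∀ y, π y = y - (g y) • ((g v)⁻¹ • v) := by
    intro y
    simp [hπdef, ContinuousLinearMap.sub_apply, ContinuousLinearMap.smulRight_apply]
  have hgπ : ∀ y, g (π y) = 0 := by
    intro y
    rw [hπapply, map_sub, _root_.map_smul]
    simp only [smul_eq_mul]
    simp [hgv.ne']
  -- the kernel of g
  set S : Submodule ℝ (Cn n) := LinearMap.ker (g : Cn n →ₗ[ℝ] ℝ) with hSdef
  have hπS : ∀ y, π y ∈ S := fun y => LinearMap.mem_ker.2 (hgπ y)
  have hrange : LinearMap.range (g : Cn n →ₗ[ℝ] ℝ) = ⊤ := by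
    rw [LinearMap.range_eq_top]
    intro x
    refine ⟨(x / g v) • v, ?_⟩
    simp only [ContinuousLinearMap.coe_coe, _root_.map_smul, smul_eq_mul]
    field_simp
  have hSrank : Module.finrank ℝ S = 2*n - 1 := by
    have h1 := LinearMap.finrank_range_add_finrank_ker (g : Cn n →ₗ[ℝ] ℝ)
    rw [hrange, finrank_top, finrank_Cn] at h1
    have h2 : Module.finrank ℝ ℝ = 1 := Module.finrank_self ℝ
    rw [hSdef]
    omega
  obtain ⟨C, hC, hCb⟩ := submodule_ball_bound S hSrank
  -- antilipschitz on E
  set E : Set (Cn n) := frontier Ω ∩ closedBall p (2*s) with hEdef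
  have hgsmall : ∀ x ∈ E, ∀ y ∈ E, ‖g (y - x)‖ ≤ c/4 * ‖y - x‖ := by
    intro x hx y hy
    have hx0 : ρ x = 0 := by have := hfr ▸ hx.1; exact this.2
    have hy0 : ρ y = 0 := by have := hfr ▸ hy.1; exact this.2
    have h1 := hmvt x hx.2 y hy.2
    rw [hx0, hy0] at h1
    have h2 : (0 - g y) - (0 - g x) = -(g y - g x) := by ring
    rw [h2, norm_neg] at h1
    rw [map_sub]
    exact h1
  have hvnorm : ‖(g v)⁻¹ • v‖ ≤ 2 / c := by
    rw [norm_smul, Real.norm_eq_abs, abs_of_pos (inv_pos.2 hgv)]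
    calc (g v)⁻¹ * ‖v‖ ≤ (g v)⁻¹ * 1 := by
          exact mul_le_mul_of_nonneg_left hv1 (inv_pos.2 hgv).le
    _ = (g v)⁻¹ := mul_one _
    _ ≤ (c/2)⁻¹ := by
        exact inv_anti₀ (by positivity) hv2.le
    _ = 2 / c := by rw [inv_div]
  have key1 : ∀ x ∈ E, ∀ y ∈ E, ‖y - x‖ ≤ 2 * ‖π y - π x‖ := by
    intro x hx y hy
    have h1 : ‖y - x‖ ≤ ‖π (y - x)‖ + ‖g (y-x)‖ * ‖(g v)⁻¹ • v‖ := by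
      have h2 : y - x = π (y - x) + (g (y-x)) • ((g v)⁻¹ • v) := by
        rw [hπapply]; abel
      calc ‖y - x‖ = ‖π (y - x) + (g (y-x)) • ((g v)⁻¹ • v)‖ := by rw [← h2]
      _ ≤ ‖π (y - x)‖ + ‖(g (y-x)) • ((g v)⁻¹ • v)‖ := norm_add_le _ _
      _ = ‖π (y - x)‖ + ‖g (y-x)‖ * ‖(g v)⁻¹ • v‖ := by rw [norm_smul]
    have h3 : ‖g (y-x)‖ * ‖(g v)⁻¹ • v‖ ≤ (c/4 * ‖y - x‖) * (2/c) := by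
      exact mul_le_mul (hgsmall x hx y hy) hvnorm (norm_nonneg _) (by positivity)
    have h4 : (c/4 * ‖y - x‖) * (2/c) = ‖y - x‖ / 2 := by field_simp; ring
    have h5 : ‖y - x‖ ≤ ‖π (y - x)‖ + ‖y - x‖ / 2 := by
      calc ‖y - x‖ ≤ ‖π (y - x)‖ + ‖g (y-x)‖ * ‖(g v)⁻¹ • v‖ := h1
      _ ≤ ‖π (y - x)‖ + (c/4 * ‖y - x‖) * (2/c) := by linarith
      _ = ‖π (y - x)‖ + ‖y - x‖ / 2 := by rw [h4]
    have h6 : π (y - x) = π y - π x := map_sub π y x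
    rw [h6] at h5
    linarith
  have key2 : ∀ a b : Cn n, ‖π a - π b‖ ≤ 3 * ‖a - b‖ := by
    intro a b
    have h6 : π a - π b = π (a - b) := (map_sub π a b).symm
    rw [h6, hπapply]
    calc ‖(a - b) - (g (a-b)) • ((g v)⁻¹ • v)‖
        ≤ ‖a - b‖ + ‖(g (a-b)) • ((g v)⁻¹ • v)‖ := norm_sub_le _ _
    _ = ‖a - b‖ + ‖g (a-b)‖ * ‖(g v)⁻¹ • v‖ := by rw [norm_smul]
    _ ≤ ‖a - b‖ + (c * ‖a - b‖) * (2/c) := by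
        refine add_le_add le_rfl (mul_le_mul (g.le_opNorm _) hvnorm (norm_nonneg _) ?_)
        positivity
    _ = 3 * ‖a - b‖ := by field_simp; ring
  set φ : Cn n → Cn n := Function.invFunOn π E with hφdef
  have hφmem : ∀ u ∈ π '' E, φ u ∈ E := fun u hu => Function.invFunOn_mem hu
  have hφeq : ∀ u ∈ π '' E, π (φ u) = u := fun u hu => Function.invFunOn_eq hu
  have hφlip : LipschitzOnWith 2 φ (π '' E) := by
    refine LipschitzOnWith.of_dist_le_mul ?_
    intro u1 h1 u2 h2
    have := key1 (φ u2) (hφmem _ h2) (φ u1) (hφmem _ h1)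
    rw [dist_eq_norm, dist_eq_norm]
    calc ‖φ u1 - φ u2‖ ≤ 2 * ‖π (φ u1) - π (φ u2)‖ := this
    _ = 2 * ‖u1 - u2‖ := by rw [hφeq _ h1, hφeq _ h2]
    _ = (2:ℝ≥0) * ‖u1 - u2‖ := by norm_num
  have hrecover : ∀ y ∈ E, φ (π y) = y := by
    intro y hy
    have h1 : π y ∈ π '' E := mem_image_of_mem π hy
    have h2 := key1 y hy (φ (π y)) (hφmem _ h1)
    rw [hφeq _ h1, sub_self, norm_zero, mul_zero] at h2
    have := norm_le_zero_iff.1 h2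
    rwa [sub_eq_zero] at this
  -- final bound
  refine ⟨s, hs, (2:ℝ≥0∞)^(2*(n:ℝ)-1) * (C * ENNReal.ofReal 3 ^ (2*(n:ℝ)-1)), ?_, ?_⟩
  · exact ENNReal.mul_ne_top (ENNReal.rpow_ne_top_of_nonneg hd0 (by norm_num))
      (ENNReal.mul_ne_top hC (ENNReal.rpow_ne_top_of_nonneg hd0 ENNReal.ofReal_ne_top))
  intro x₀ t ht
  set T : Set (Cn n) := E ∩ closedBall x₀ t with hTdef
  have hsub1 : T ⊆ φ '' (π '' T) := by
    intro y hy
    exact ⟨π y, mem_image_of_mem π hy, hrecover y hy.1⟩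
  have hsub2 : π '' T ⊆ (S : Set (Cn n)) ∩ closedBall (π x₀) (3*t) := by
    rintro u ⟨y, hy, rfl⟩
    refine ⟨hπS y, ?_⟩
    rw [mem_closedBall, dist_eq_norm]
    calc ‖π y - π x₀‖ ≤ 3 * ‖y - x₀‖ := key2 y x₀
    _ ≤ 3 * t := by
        have := mem_closedBall.1 hy.2
        rw [dist_eq_norm] at this
        linarith
  have hcast : (((2*n-1 : ℕ)) : ℝ) = 2*(n:ℝ)-1 := by
    have h1 : (1:ℕ) ≤ 2*n := by omega
    push_cast [h1]
    ring
  calc μH[2*(n:ℝ)-1] T ≤ μH[2*(n:ℝ)-1] (φ '' (π '' T)) := measure_mono hsub1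
  _ ≤ (2:ℝ≥0)^(2*(n:ℝ)-1) * μH[2*(n:ℝ)-1] (π '' T) :=
      (hφlip.mono (image_mono inter_subset_left)).hausdorffMeasure_image_le hd0
  _ ≤ (2:ℝ≥0)^(2*(n:ℝ)-1) * μH[2*(n:ℝ)-1] ((S : Set (Cn n)) ∩ closedBall (π x₀) (3*t)) := by
      gcongr

  _ ≤ (2:ℝ≥0)^(2*(n:ℝ)-1) * (C * ENNReal.ofReal (3*t) ^ (2*(n:ℝ)-1)) := by
      gcongr
      have := hCb (π x₀) (3*t) (by linarith)
      rwa [hcast] at this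
  _ = (2:ℝ≥0∞)^(2*(n:ℝ)-1) * (C * ENNReal.ofReal 3 ^ (2*(n:ℝ)-1)) *
      ENNReal.ofReal t ^ (2*(n:ℝ)-1) := by
      rw [ENNReal.ofReal_mul (by norm_num : (0:ℝ) ≤ 3),
        ENNReal.mul_rpow_of_nonneg _ _ hd0]
      push_cast
      ring

lemma global_ahlfors {n : ℕ} (hn : 0 < n) {Ω : Set (Cn n)}
    (hΩb : Bornology.IsBounded Ω) (hbd : HasC1Boundary Ω) :
    ∃ (A : ℝ≥0∞) (t₀ : ℝ), A ≠ ⊤ ∧ 0 < t₀ ∧ μH[2*(n:ℝ)-1] (frontier Ω) ≠ ⊤ ∧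
      ∀ x₀ : Cn n, ∀ t : ℝ, 0 < t → t ≤ t₀ →
        μH[2*(n:ℝ)-1] (frontier Ω ∩ closedBall x₀ t) ≤
          A * ENNReal.ofReal t ^ (2*(n:ℝ)-1) := by
  classical
  obtain ⟨ρ, U, hU, hclU, hρ, -, hfr, hgrad⟩ := hbd
  set F : Set (Cn n) := frontier Ω with hFdef
  have hFclosed : IsClosed F := isClosed_frontier
  have hFbdd : Bornology.IsBounded F := (hΩb.closure).subset frontier_subset_closure
  have hFcompact : IsCompact F := Metric.isCompact_of_isClosed_isBounded hFclosed hFbdd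
  by_cases hFne : F = ∅
  · refine ⟨1, 1, by norm_num, one_pos, ?_, ?_⟩
    · rw [hFne]; simp
    · intro x₀ t _ _
      rw [hFne]
      simp
  have H : ∀ p ∈ F, ∃ s : ℝ, 0 < s ∧ ∃ A : ℝ≥0∞, A ≠ ⊤ ∧ ∀ x₀ : Cn n, ∀ t : ℝ, 0 ≤ t →
      μH[2*(n:ℝ)-1] (F ∩ closedBall p (2*s) ∩ closedBall x₀ t) ≤
        A * ENNReal.ofReal t ^ (2*(n:ℝ)-1) :=
    fun p hp => local_ahlfors hn hU hρ hfr p hp (hgrad p hp)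
  choose! s hs A hA hP using H
  have hcover : F ⊆ ⋃ p : F, ball (p : Cn n) (s p) := by
    intro y hy
    exact mem_iUnion.2 ⟨⟨y, hy⟩, mem_ball_self (hs y hy)⟩
  obtain ⟨I, hI⟩ := hFcompact.elim_finite_subcover (fun p : F => ball (p : Cn n) (s p))
    (fun _ => isOpen_ball) hcover
  have hIne : I.Nonempty := by
    obtain ⟨y, hy⟩ := Set.nonempty_iff_ne_empty.2 hFne
    obtain ⟨i, hiI, hyi⟩ := mem_iUnion₂.1 (hI hy)
    exact ⟨i, hiI⟩
  set t₀ : ℝ := (I.inf' hIne fun i => s i) / 2 with ht₀def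
  have ht₀ : 0 < t₀ := by
    have : ∀ i ∈ I, 0 < s i := fun i _ => hs i i.2
    have h2 : 0 < I.inf' hIne fun i => s i := by
      rw [Finset.lt_inf'_iff]
      exact fun i hi => this i hi
    positivity
  set Abig : ℝ≥0∞ := I.sup fun i => A i with hAdef
  have hAbig : Abig ≠ ⊤ := by
    rw [hAdef]
    refine (Finset.sup_lt_iff (by simp [lt_top_iff_ne_top])).2 ?_ |>.ne
    exact fun i _ => lt_top_iff_ne_top.2 (hA i i.2)
  refine ⟨Abig, t₀, hAbig, ht₀, ?_, ?_⟩
  · -- finiteness of the total measure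
    have hsub : F ⊆ ⋃ i ∈ I, F ∩ closedBall (i : Cn n) (2 * s i) := by
      intro y hy
      obtain ⟨i, hiI, hyi⟩ := mem_iUnion₂.1 (hI hy)
      refine mem_biUnion hiI ⟨hy, ?_⟩
      have := mem_ball.1 hyi
      have hsi := hs i i.2
      rw [mem_closedBall]
      linarith
    refine ((measure_mono hsub).trans (measure_biUnion_finset_le _ _)).trans_lt ?_ |>.ne
    refine ENNReal.sum_lt_top.2 fun i hi => ?_
    have h1 := hP i i.2 (i : Cn n) (2 * s i) (by have := hs i i.2; linarith)
    have h2 : F ∩ closedBall (i : Cn n) (2 * s i) ∩ closedBall (i : Cn n) (2 * s i) =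
        F ∩ closedBall (i : Cn n) (2 * s i) := by
      rw [inter_assoc, inter_self]
    rw [h2] at h1
    exact h1.trans_lt (ENNReal.mul_lt_top (lt_top_iff_ne_top.2 (hA i i.2))
      (ENNReal.rpow_lt_top_of_nonneg (by
        have : (1:ℝ) ≤ (n:ℝ) := by exact_mod_cast hn
        linarith) ENNReal.ofReal_ne_top))
  · intro x₀ t ht ht'
    by_cases hne : (F ∩ closedBall x₀ t) = ∅
    · rw [hne]; simp
    obtain ⟨y, hyF, hyB⟩ := Set.nonempty_iff_ne_empty.2 hne
    obtain ⟨i, hiI, hyi⟩ := mem_iUnion₂.1 (hI hyF)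
    have hsub : F ∩ closedBall x₀ t ⊆ F ∩ closedBall (i : Cn n) (2 * s i) ∩ closedBall x₀ t := by
      rintro z ⟨hzF, hzB⟩
      refine ⟨⟨hzF, ?_⟩, hzB⟩
      have h1 : dist z x₀ ≤ t := mem_closedBall.1 hzB
      have h2 : dist y x₀ ≤ t := mem_closedBall.1 hyB
      have h3 : dist y (i:Cn n) < s i := mem_ball.1 hyi
      have h4 : t₀ ≤ s i / 2 := by
        rw [ht₀def]
        have := Finset.inf'_le (f := fun j : {x // x ∈ F} => s (j : Cn n)) hiI
        linarith
      rw [mem_closedBall]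
      calc dist z (i : Cn n) ≤ dist z x₀ + dist x₀ y + dist y (i : Cn n) :=
            dist_triangle4 _ _ _ _
      _ ≤ t + t + s i := by
          rw [dist_comm x₀ y]
          refine add_le_add (add_le_add h1 h2) h3.le
      _ ≤ 2 * s i := by
          have h5 : t ≤ s i / 2 := ht'.trans h4
          linarith
    calc μH[2*(n:ℝ)-1] (F ∩ closedBall x₀ t)
        ≤ μH[2*(n:ℝ)-1] (F ∩ closedBall (i:Cn n) (2 * s i) ∩ closedBall x₀ t) :=
          measure_mono hsub
    _ ≤ A i * ENNReal.ofReal t ^ (2*(n:ℝ)-1) := hP i i.2 x₀ t ht.le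
    _ ≤ Abig * ENNReal.ofReal t ^ (2*(n:ℝ)-1) := by
        gcongr
        exact Finset.le_sup (f := fun j : {x // x ∈ F} => A (j : Cn n)) hiI

lemma dyadic_kernel_bound {α : Type*} [MetricSpace α] [MeasurableSpace α]
    [OpensMeasurableSpace α] (m : Measure α) {G : Set α} (hG : MeasurableSet G)
    (w : α) (hw : w ∉ G) (c : ℝ≥0∞) {t₀ D β : ℝ}
    (ht₀ : 0 < t₀) (hβ : 0 < β) (hβD : β < D)
    (hbound : ∀ t : ℝ, 0 < t → t ≤ t₀ → m (G ∩ closedBall w t) ≤ c * ENNReal.ofReal t ^ D) :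
    ∫⁻ x in G, ENNReal.ofReal (dist x w) ^ (-β) ∂m ≤
      ENNReal.ofReal (t₀^(-β)) * m G +
        c * ENNReal.ofReal ((2:ℝ)^β * t₀^(D-β)) *
          (1 - ENNReal.ofReal ((2:ℝ)^(-(D-β))))⁻¹ := by
  classical
  set r : ℕ → ℝ := fun j => t₀ * (1/2:ℝ)^j with hrdef
  have hrpos : ∀ j, 0 < r j := fun j => by positivity
  have hrle : ∀ j, r j ≤ t₀ := fun j => by
    rw [hrdef]
    have h1 : (1/2:ℝ)^j ≤ 1 := pow_le_one₀ (by norm_num) (by norm_num)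
    nlinarith
  set val : ℕ → ℝ≥0∞ := fun j => ENNReal.ofReal ((r j / 2)^(-β)) with hvaldef
  have hpt : ∀ x ∈ G, ENNReal.ofReal (dist x w) ^ (-β) ≤
      ENNReal.ofReal (t₀^(-β)) +
        ∑' j, (closedBall w (r j)).indicator (fun _ => val j) x := by
    intro x hx
    have hdx : 0 < dist x w := dist_pos.2 (fun h => hw (h ▸ hx))
    rcases le_or_gt (dist x w) t₀ with hcase | hcase
    · have hex : ∃ j : ℕ, ¬ (dist x w ≤ r j) := by
        obtain ⟨j, hj⟩ := exists_pow_lt_of_lt_one (div_pos hdx ht₀) (by norm_num : (1/2:ℝ) < 1)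
        refine ⟨j, not_le.2 ?_⟩
        rw [hrdef]
        have := (lt_div_iff₀ ht₀).1 hj
        nlinarith
      have hj₀ := Nat.find_spec hex
      have hj₀pos : Nat.find hex ≠ 0 := by
        intro h
        apply hj₀
        rw [h, hrdef]
        simpa using hcase
      obtain ⟨j₁, hj₁⟩ : ∃ j₁, Nat.find hex = j₁ + 1 := ⟨Nat.find hex - 1, by omega⟩
      have hle : dist x w ≤ r j₁ := by
        have := Nat.find_min hex (m := j₁) (by omega)
        exact not_not.1 this
      have hgt : r j₁ / 2 < dist x w := by
        have h1 : ¬ (dist x w ≤ r (j₁+1)) := hj₁ ▸ hj₀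
        have h2 : r (j₁+1) = r j₁ / 2 := by rw [hrdef]; ring
        rw [h2] at h1
        exact not_le.1 h1
      have hkey : ENNReal.ofReal (dist x w) ^ (-β) ≤ val j₁ := by
        rw [ENNReal.ofReal_rpow_of_pos hdx, hvaldef]
        apply ENNReal.ofReal_le_ofReal
        exact Real.rpow_le_rpow_of_nonpos (by positivity) hgt.le (by linarith)
      refine le_trans hkey (le_add_left ?_)
      refine le_trans ?_ (ENNReal.le_tsum j₁)
      rw [indicator_of_mem (mem_closedBall.2 hle)]
    · refine le_trans ?_ (le_add_right le_rfl)
      rw [ENNReal.ofReal_rpow_of_pos hdx]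
      apply ENNReal.ofReal_le_ofReal
      exact Real.rpow_le_rpow_of_nonpos ht₀ hcase.le (by linarith)
  have hmeas : ∀ j : ℕ, Measurable ((closedBall w (r j)).indicator
      (fun _ : α => val j)) := fun j => measurable_const.indicator measurableSet_closedBall
  calc ∫⁻ x in G, ENNReal.ofReal (dist x w) ^ (-β) ∂m
      ≤ ∫⁻ x in G, (ENNReal.ofReal (t₀^(-β)) +
          ∑' j, (closedBall w (r j)).indicator (fun _ => val j) x) ∂m :=
        setLIntegral_mono' hG hpt
  _ = ENNReal.ofReal (t₀^(-β)) * m G +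
      ∑' j, val j * m (G ∩ closedBall w (r j)) := by
      rw [lintegral_add_left measurable_const]
      rw [setLIntegral_const]
      congr 1
      rw [lintegral_tsum (fun j => (hmeas j).aemeasurable)]
      congr 1
      funext j
      rw [lintegral_indicator measurableSet_closedBall, setLIntegral_const,
        Measure.restrict_apply measurableSet_closedBall, inter_comm]
  _ ≤ ENNReal.ofReal (t₀^(-β)) * m G +
      ∑' j, (c * ENNReal.ofReal ((2:ℝ)^β * t₀^(D-β))) *
        (ENNReal.ofReal ((2:ℝ)^(-(D-β))))^j := by
      refine add_le_add_right (ENNReal.tsum_le_tsum fun j => ?_) _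
      have h2 : val j * ENNReal.ofReal (r j) ^ D =
          ENNReal.ofReal ((2:ℝ)^β * t₀^(D-β) * ((2:ℝ)^(-(D-β)))^j) := by
        rw [hvaldef, ENNReal.ofReal_rpow_of_pos (hrpos j), ← ENNReal.ofReal_mul (by positivity)]
        congr 1
        -- real computation
        have hu : (0:ℝ) < (1/2:ℝ)^j := by positivity
        have e1 : (r j / 2)^(-β) = (r j)^(-β) * (2:ℝ)^β := by
          rw [div_eq_mul_inv, Real.mul_rpow (hrpos j).le (by positivity)]
          congr 1
          rw [Real.inv_rpow (by norm_num : (0:ℝ) ≤ 2), Real.rpow_neg (by norm_num : (0:ℝ) ≤ 2),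
            inv_inv]
        have e2 : (r j)^(-β) * (r j)^D = (r j)^(D - β) := by
          rw [← Real.rpow_add (hrpos j)]
          ring_nf
        have e3 : (r j)^(D-β) = t₀^(D-β) * ((2:ℝ)^(-(D-β)))^j := by
          rw [hrdef]
          simp only
          rw [Real.mul_rpow ht₀.le hu.le]
          congr 1
          rw [← Real.rpow_natCast ((1/2:ℝ)) j, ← Real.rpow_mul (by norm_num)]
          rw [← Real.rpow_natCast ((2:ℝ)^(-(D-β))) j, ← Real.rpow_mul (by positivity)]
          rw [show ((1:ℝ)/2) = 2⁻¹ by norm_num, Real.inv_rpow (by norm_num)]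
          rw [← Real.rpow_neg (by norm_num)]
          ring_nf
        calc (r j / 2)^(-β) * (r j)^D = ((r j)^(-β) * (r j)^D) * (2:ℝ)^β := by
              rw [e1]; ring
        _ = (r j)^(D-β) * (2:ℝ)^β := by rw [e2]
        _ = (2:ℝ)^β * t₀^(D-β) * ((2:ℝ)^(-(D-β)))^j := by rw [e3]; ring
      calc val j * m (G ∩ closedBall w (r j))
          ≤ val j * (c * ENNReal.ofReal (r j) ^ D) :=
            mul_le_mul_right (hbound (r j) (hrpos j) (hrle j)) _
      _ = c * (val j * ENNReal.ofReal (r j) ^ D) := by ring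
      _ = c * ENNReal.ofReal ((2:ℝ)^β * t₀^(D-β) * ((2:ℝ)^(-(D-β)))^j) := by rw [h2]
      _ = (c * ENNReal.ofReal ((2:ℝ)^β * t₀^(D-β))) * (ENNReal.ofReal ((2:ℝ)^(-(D-β))))^j := by
          rw [ENNReal.ofReal_mul (by positivity), ENNReal.ofReal_pow (by positivity)]
          ring
  _ = _ := by
      rw [ENNReal.tsum_mul_left, ENNReal.tsum_geometric]
      try ring

-- exponent arithmetic packaged
lemma exponent_facts {n : ℕ} (hn : 0 < n) {q r : ℝ} (hr : 1 < r) (hq : r < q)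
    (hqr : q * (2*(n:ℝ)-1) < 2*(n:ℝ)*r) :
    ∃ a : ℝ, 0 < a ∧ a < 1 ∧ 1/r < a ∧ a * q * (2*(n:ℝ)-1) < 2*(n:ℝ) := by
  have hn1 : (1:ℝ) ≤ (n:ℝ) := by exact_mod_cast hn
  set d : ℝ := 2*(n:ℝ)-1 with hd
  have hd0 : 0 < d := by simp only [hd]; linarith
  have hq0 : 0 < q := by linarith
  have hqd : 0 < q * d := by positivity
  have h1 : 1/r < 2*(n:ℝ)/(q*d) := by
    rw [div_lt_div_iff₀ (by linarith) hqd]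
    nlinarith
  have h2 : 1/r < min 1 (2*(n:ℝ)/(q*d)) := by
    rcases min_cases 1 (2*(n:ℝ)/(q*d)) with ⟨h,_⟩|⟨h,_⟩
    · rw [h]; rw [div_lt_one (by linarith)]; exact hr
    · rw [h]; exact h1
  refine ⟨(1/r + min 1 (2*(n:ℝ)/(q*d)))/2, ?_, ?_, ?_, ?_⟩
  · have : 0 < 1/r := by positivity
    linarith
  · have h3 : min 1 (2*(n:ℝ)/(q*d)) ≤ 1 := min_le_left _ _
    linarith
  · linarith
  · have h4 : (1/r + min 1 (2*(n:ℝ)/(q*d)))/2 < 2*(n:ℝ)/(q*d) := by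
      have h5 : min 1 (2*(n:ℝ)/(q*d)) ≤ 2*(n:ℝ)/(q*d) := min_le_right _ _
      linarith
    have h6 := (lt_div_iff₀ hqd).1 h4
    nlinarith [h6]

lemma inv_one_sub_ofReal_ne_top {x : ℝ} (hx : x < 1) : (1 - ENNReal.ofReal x)⁻¹ ≠ ⊤ := by
  rw [ENNReal.inv_ne_top]
  exact (tsub_pos_of_lt (ENNReal.ofReal_lt_one.2 hx)).ne'

lemma main_estimate {n : ℕ} (hn : 0 < n) {Ω : Set (Cn n)}
    (hΩo : IsOpen Ω) (hΩb : Bornology.IsBounded Ω) (hbd : HasC1Boundary Ω)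
    {q r : ℝ} (hr : 1 < r) (hq : r < q) (hqr : q * (2*(n:ℝ)-1) < 2*(n:ℝ)*r) :
    ∃ C : ℝ≥0∞, C ≠ ⊤ ∧ 1 ≤ C ∧ ∀ f : Cn n → ℂ, Measurable f →
      ∫⁻ z in Ω, (∫⁻ ξ in frontier Ω,
          ((‖f ξ‖₊ : ℝ≥0∞) * ENNReal.ofReal (dist ξ z) ^ (-(2*(n:ℝ)-1))) ∂μH[2*(n:ℝ)-1]) ^ q
        ∂volume
      ≤ C * (∫⁻ ξ in frontier Ω, (‖f ξ‖₊ : ℝ≥0∞) ^ r ∂μH[2*(n:ℝ)-1]) ^ (q/r) := by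
  classical
  have hn1 : (1:ℝ) ≤ (n:ℝ) := by exact_mod_cast hn
  have hd0 : (0:ℝ) < 2*(n:ℝ)-1 := by linarith
  have hq1 : 1 < q := hr.trans hq
  have hq0 : 0 < q := by linarith
  have hr0 : 0 < r := by linarith
  have hrne : r - 1 ≠ 0 := by intro h; nlinarith [h]
  have hqne : q - 1 ≠ 0 := by intro h; nlinarith [h]
  have hqrne : q - r ≠ 0 := by intro h; nlinarith [h]
  obtain ⟨a, ha0, ha1, har, ha2n⟩ := exponent_facts hn hr hq hqr
  obtain ⟨A, t₀, hA, ht₀, hMfin, hAh⟩ := global_ahlfors hn hΩb hbd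
  set F := frontier Ω with hFdef
  have hFmeas : MeasurableSet F := isClosed_frontier.measurableSet
  have hΩmeas : MeasurableSet Ω := hΩo.measurableSet
  set r' : ℝ := r/(r-1) with hr'def
  set q' : ℝ := q/(q-1) with hq'def
  set s : ℝ := q*r/(q-r) with hsdef
  have hr'0 : 0 < r' := by rw [hr'def]; apply div_pos hr0; linarith
  have hq'0 : 0 < q' := by rw [hq'def]; apply div_pos hq0; linarith
  have hs0 : 0 < s := by rw [hsdef]; apply div_pos (by positivity); linarith
  have conjq : Real.HolderConjugate q q' := by
    refine Real.holderConjugate_iff.2 ⟨hq1, ?_⟩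
    rw [hq'def]
    field_simp
    ring
  have conj2 : Real.HolderConjugate (s/q') (r'/q') := by
    rw [Real.holderConjugate_iff]
    constructor
    · refine (one_lt_div hq'0).2 ?_
      rw [hq'def, hsdef, div_lt_div_iff₀ (by linarith) (by nlinarith)]
      nlinarith [mul_pos (mul_pos hq0 hq0) (sub_pos.2 hr)]
    · rw [hr'def, hq'def, hsdef]
      field_simp
      ring
  set β₁ : ℝ := (2*(n:ℝ)-1)*(a*q) with hβ₁def
  set β₂ : ℝ := (2*(n:ℝ)-1)*((1-a)*r') with hβ₂def
  have hβ₁0 : 0 < β₁ := by rw [hβ₁def]; positivity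
  have hβ₁2n : β₁ < 2*(n:ℝ) := by rw [hβ₁def]; nlinarith [ha2n]
  have h1a : 0 < 1 - a := by linarith
  have hβ₂0 : 0 < β₂ := by rw [hβ₂def]; positivity
  have h1ar' : (1-a)*r' < 1 := by
    have h3 : 1 < a * r := (div_lt_iff₀ hr0).1 har
    rw [hr'def, show (1-a)*(r/(r-1)) = ((1-a)*r)/(r-1) from by ring,
      div_lt_one (by linarith)]
    nlinarith
  have hβ₂d : β₂ < 2*(n:ℝ)-1 := by
    rw [hβ₂def]
    nlinarith
  -- interior bound
  have hvolΩ : volume Ω ≠ ⊤ := by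
    refine ((measure_mono subset_closure).trans_lt ?_).ne
    exact (Metric.isCompact_of_isClosed_isBounded isClosed_closure hΩb.closure).measure_lt_top
  have hballvol : volume (ball (0:Cn n) 1) ≠ ⊤ := measure_ball_lt_top.ne
  have hbound2 : ∀ ξ : Cn n, ∀ t:ℝ, 0 < t → t ≤ 1 →
      volume (Ω ∩ closedBall ξ t) ≤ volume (ball (0:Cn n) 1) * ENNReal.ofReal t ^ (2*(n:ℝ)) := by
    intro ξ t ht _
    refine (measure_mono inter_subset_right).trans ?_
    rw [Measure.addHaar_closedBall volume ξ ht.le, finrank_Cn]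
    rw [ENNReal.ofReal_pow ht.le, mul_comm]
    gcongr
    rw [← ENNReal.rpow_natCast (ENNReal.ofReal t) (2*n)]
    apply le_of_eq
    congr 1
    push_cast
    ring
  set C₂ : ℝ≥0∞ := ENNReal.ofReal ((1:ℝ)^(-β₁)) * volume Ω +
    volume (ball (0:Cn n) 1) * ENNReal.ofReal ((2:ℝ)^β₁ * (1:ℝ)^(2*(n:ℝ)-β₁)) *
      (1 - ENNReal.ofReal ((2:ℝ)^(-(2*(n:ℝ)-β₁))))⁻¹ with hC₂def
  have hC₂ : C₂ ≠ ⊤ := by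
    rw [hC₂def]
    refine ENNReal.add_ne_top.2 ⟨ENNReal.mul_ne_top ENNReal.ofReal_ne_top hvolΩ, ?_⟩
    exact ENNReal.mul_ne_top (ENNReal.mul_ne_top hballvol ENNReal.ofReal_ne_top)
      (inv_one_sub_ofReal_ne_top (Real.rpow_lt_one_of_one_lt_of_neg (by norm_num)
        (by linarith)))
  have hInt : ∀ ξ : Cn n, ξ ∉ Ω →
      ∫⁻ z in Ω, ENNReal.ofReal (dist z ξ) ^ (-β₁) ∂volume ≤ C₂ :=
    fun ξ hξ => dyadic_kernel_bound volume hΩmeas ξ hξ (volume (ball (0:Cn n) 1))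
      one_pos hβ₁0 hβ₁2n (hbound2 ξ)
  -- boundary bound
  set C₃ : ℝ≥0∞ := ENNReal.ofReal (t₀^(-β₂)) * μH[2*(n:ℝ)-1] F +
    A * ENNReal.ofReal ((2:ℝ)^β₂ * t₀^((2*(n:ℝ)-1)-β₂)) *
      (1 - ENNReal.ofReal ((2:ℝ)^(-((2*(n:ℝ)-1)-β₂))))⁻¹ with hC₃def
  have hC₃ : C₃ ≠ ⊤ := by
    rw [hC₃def]
    refine ENNReal.add_ne_top.2 ⟨ENNReal.mul_ne_top ENNReal.ofReal_ne_top hMfin, ?_⟩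
    exact ENNReal.mul_ne_top (ENNReal.mul_ne_top hA ENNReal.ofReal_ne_top)
      (inv_one_sub_ofReal_ne_top (Real.rpow_lt_one_of_one_lt_of_neg (by norm_num)
        (by linarith)))
  have hBdry : ∀ z : Cn n, z ∉ F →
      ∫⁻ ξ in F, ENNReal.ofReal (dist ξ z) ^ (-β₂) ∂μH[2*(n:ℝ)-1] ≤ C₃ :=
    fun z hz => dyadic_kernel_bound (μH[2*(n:ℝ)-1]) hFmeas z hz A ht₀ hβ₂0 hβ₂d
      (fun t ht htt₀ => hAh z t ht htt₀)
  -- the constant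
  refine ⟨max 1 (C₃ ^ (q/r') * C₂), ?_, le_max_left _ _, ?_⟩
  · have h1 : C₃ ^ (q/r') * C₂ ≠ ⊤ :=
      ENNReal.mul_ne_top (ENNReal.rpow_ne_top_of_nonneg (by positivity) hC₃) hC₂
    exact (max_lt ENNReal.one_lt_top h1.lt_top).ne
  intro f hf
  set X : ℝ≥0∞ := ∫⁻ ξ in F, (‖f ξ‖₊ : ℝ≥0∞) ^ r ∂μH[2*(n:ℝ)-1] with hXdef
  by_cases hX : X = ⊤
  · rw [hX, ENNReal.top_rpow_of_pos (by positivity), ENNReal.mul_top (by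
      intro h0
      have := le_max_left (1:ℝ≥0∞) (C₃ ^ (q/r') * C₂)
      rw [h0] at this
      simp at this)]
    exact le_top
  have hfm : Measurable fun ξ : Cn n => (‖f ξ‖₊ : ℝ≥0∞) := hf.nnnorm.coe_nnreal_ennreal
  have hKm : ∀ z : Cn n, Measurable fun ξ : Cn n => ENNReal.ofReal (dist ξ z) :=
    fun z => (continuous_id.dist continuous_const).measurable.ennreal_ofReal
  have hXfin : X ≠ ⊤ := hX
  -- pointwise Schur bound
  have step1 : ∀ z ∈ Ω,
      (∫⁻ ξ in F, ((‖f ξ‖₊ : ℝ≥0∞) * ENNReal.ofReal (dist ξ z) ^ (-(2*(n:ℝ)-1)))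
          ∂μH[2*(n:ℝ)-1]) ^ q ≤
        (∫⁻ ξ in F, (‖f ξ‖₊ : ℝ≥0∞) ^ r * ENNReal.ofReal (dist ξ z) ^ (-β₁)
          ∂μH[2*(n:ℝ)-1]) * (X ^ (q/s) * C₃ ^ (q/r')) := by
    intro z hz
    have hzF : z ∉ F := by
      rw [hFdef, hΩo.frontier_eq]
      exact fun h => h.2 hz
    set u : Cn n → ℝ≥0∞ := fun ξ =>
      (‖f ξ‖₊ : ℝ≥0∞) ^ (r/q) * ENNReal.ofReal (dist ξ z) ^ (-((2*(n:ℝ)-1)*a)) with hudef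
    set v : Cn n → ℝ≥0∞ := fun ξ =>
      (‖f ξ‖₊ : ℝ≥0∞) ^ (1-r/q) * ENNReal.ofReal (dist ξ z) ^ (-((2*(n:ℝ)-1)*(1-a)))
      with hvdef
    have hum : Measurable u := (hfm.pow_const _).mul ((hKm z).pow_const _)
    have hvm : Measurable v := (hfm.pow_const _).mul ((hKm z).pow_const _)
    have hident : ∀ ξ ∈ F,
        (‖f ξ‖₊ : ℝ≥0∞) * ENNReal.ofReal (dist ξ z) ^ (-(2*(n:ℝ)-1)) = u ξ * v ξ := by
      intro ξ hξ
      have hdist : 0 < dist ξ z := dist_pos.2 (fun h => hzF (h ▸ hξ))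
      have hDne : ENNReal.ofReal (dist ξ z) ≠ 0 := by
        simp only [ne_eq, ENNReal.ofReal_eq_zero, not_le]
        linarith
      have h1 : (‖f ξ‖₊ : ℝ≥0∞) ^ (r/q) * (‖f ξ‖₊ : ℝ≥0∞) ^ (1-r/q) =
          (‖f ξ‖₊ : ℝ≥0∞) := by
        rw [← ENNReal.rpow_add_of_nonneg (r/q) (1-r/q) (by positivity)
          (by rw [sub_nonneg, div_le_one hq0]; linarith)]
        norm_num
      have h2 : ENNReal.ofReal (dist ξ z) ^ (-((2*(n:ℝ)-1)*a)) *
          ENNReal.ofReal (dist ξ z) ^ (-((2*(n:ℝ)-1)*(1-a))) =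
          ENNReal.ofReal (dist ξ z) ^ (-(2*(n:ℝ)-1)) := by
        rw [← ENNReal.rpow_add _ _ hDne ENNReal.ofReal_ne_top]
        congr 1
        ring
      rw [hudef, hvdef]
      simp only
      rw [mul_mul_mul_comm, h1, h2]
    have hH1 := ENNReal.lintegral_mul_le_Lp_mul_Lq (μH[2*(n:ℝ)-1].restrict F) conjq
      hum.aemeasurable hvm.aemeasurable
    have hupow : ∀ ξ : Cn n, u ξ ^ q =
        (‖f ξ‖₊ : ℝ≥0∞) ^ r * ENNReal.ofReal (dist ξ z) ^ (-β₁) := by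
      intro ξ
      rw [hudef]
      simp only
      rw [ENNReal.mul_rpow_of_nonneg _ _ hq0.le, ← ENNReal.rpow_mul, ← ENNReal.rpow_mul]
      congr 1
      · congr 1
        field_simp
      · congr 1
        rw [hβ₁def]
        ring
    have hvpow : ∀ ξ : Cn n, v ξ ^ q' =
        (‖f ξ‖₊ : ℝ≥0∞) ^ ((1-r/q)*q') *
          ENNReal.ofReal (dist ξ z) ^ (-((2*(n:ℝ)-1)*(1-a))*q') := by
      intro ξ
      rw [hvdef]
      simp only
      rw [ENNReal.mul_rpow_of_nonneg _ _ hq'0.le, ← ENNReal.rpow_mul, ← ENNReal.rpow_mul]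
    -- Hölder 2 on the v-part
    have hH2 := ENNReal.lintegral_mul_le_Lp_mul_Lq (μH[2*(n:ℝ)-1].restrict F) conj2
      ((hfm.pow_const ((1-r/q)*q')).aemeasurable)
      (((hKm z).pow_const (-((2*(n:ℝ)-1)*(1-a))*q')).aemeasurable)
    have hu2 : ∀ ξ : Cn n, ((‖f ξ‖₊ : ℝ≥0∞) ^ ((1-r/q)*q')) ^ (s/q') =
        (‖f ξ‖₊ : ℝ≥0∞) ^ r := by
      intro ξ
      rw [← ENNReal.rpow_mul]
      congr 1
      rw [hq'def, hsdef]
      field_simp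
    have hv2 : ∀ ξ : Cn n, (ENNReal.ofReal (dist ξ z) ^ (-((2*(n:ℝ)-1)*(1-a))*q')) ^ (r'/q') =
        ENNReal.ofReal (dist ξ z) ^ (-β₂) := by
      intro ξ
      rw [← ENNReal.rpow_mul]
      congr 1
      rw [hβ₂def, hq'def, hr'def]
      field_simp
    have hvint : ∫⁻ ξ in F, v ξ ^ q' ∂μH[2*(n:ℝ)-1] ≤
        X ^ (q'/s) * C₃ ^ (q'/r') := by
      calc ∫⁻ ξ in F, v ξ ^ q' ∂μH[2*(n:ℝ)-1]
          = ∫⁻ ξ in F, ((fun ξ : Cn n => (‖f ξ‖₊ : ℝ≥0∞) ^ ((1-r/q)*q')) *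
              (fun ξ : Cn n => ENNReal.ofReal (dist ξ z) ^ (-((2*(n:ℝ)-1)*(1-a))*q'))) ξ
              ∂μH[2*(n:ℝ)-1] := by
            apply lintegral_congr
            intro ξ
            rw [hvpow ξ]
            rfl
      _ ≤ (∫⁻ ξ in F, ((‖f ξ‖₊ : ℝ≥0∞) ^ ((1-r/q)*q')) ^ (s/q') ∂μH[2*(n:ℝ)-1]) ^ (1/(s/q')) *
          (∫⁻ ξ in F, (ENNReal.ofReal (dist ξ z) ^ (-((2*(n:ℝ)-1)*(1-a))*q')) ^ (r'/q')
            ∂μH[2*(n:ℝ)-1]) ^ (1/(r'/q')) := hH2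
      _ = (∫⁻ ξ in F, (‖f ξ‖₊ : ℝ≥0∞) ^ r ∂μH[2*(n:ℝ)-1]) ^ (q'/s) *
          (∫⁻ ξ in F, ENNReal.ofReal (dist ξ z) ^ (-β₂) ∂μH[2*(n:ℝ)-1]) ^ (q'/r') := by
            rw [one_div_div, one_div_div]
            congr 1
            · congr 1
              exact lintegral_congr fun ξ => by rw [hu2 ξ]
            · congr 1
              exact lintegral_congr fun ξ => by rw [hv2 ξ]
      _ ≤ X ^ (q'/s) * C₃ ^ (q'/r') :=
            mul_le_mul' le_rfl (ENNReal.rpow_le_rpow (hBdry z hzF) (by positivity))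
    -- combine
    have hinner : ∫⁻ ξ in F, ((‖f ξ‖₊ : ℝ≥0∞) * ENNReal.ofReal (dist ξ z) ^ (-(2*(n:ℝ)-1)))
        ∂μH[2*(n:ℝ)-1] ≤
        (∫⁻ ξ in F, (‖f ξ‖₊ : ℝ≥0∞) ^ r * ENNReal.ofReal (dist ξ z) ^ (-β₁)
          ∂μH[2*(n:ℝ)-1]) ^ (1/q) * (X ^ (1/s) * C₃ ^ (1/r')) := by
      calc ∫⁻ ξ in F, ((‖f ξ‖₊ : ℝ≥0∞) * ENNReal.ofReal (dist ξ z) ^ (-(2*(n:ℝ)-1)))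
          ∂μH[2*(n:ℝ)-1] = ∫⁻ ξ in F, (u * v) ξ ∂μH[2*(n:ℝ)-1] :=
            setLIntegral_congr_fun hFmeas hident
      _ ≤ (∫⁻ ξ in F, u ξ ^ q ∂μH[2*(n:ℝ)-1]) ^ (1/q) *
          (∫⁻ ξ in F, v ξ ^ q' ∂μH[2*(n:ℝ)-1]) ^ (1/q') := hH1
      _ ≤ (∫⁻ ξ in F, (‖f ξ‖₊ : ℝ≥0∞) ^ r * ENNReal.ofReal (dist ξ z) ^ (-β₁)
            ∂μH[2*(n:ℝ)-1]) ^ (1/q) * (X ^ (q'/s) * C₃ ^ (q'/r')) ^ (1/q') := by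
            refine mul_le_mul' (le_of_eq ?_) (ENNReal.rpow_le_rpow hvint (by positivity))
            congr 1
            exact lintegral_congr fun ξ => hupow ξ
      _ = _ := by
            congr 1
            rw [ENNReal.mul_rpow_of_nonneg _ _ (by positivity),
              ← ENNReal.rpow_mul, ← ENNReal.rpow_mul]
            congr 2
            · field_simp
            · field_simp
    calc (∫⁻ ξ in F, ((‖f ξ‖₊ : ℝ≥0∞) * ENNReal.ofReal (dist ξ z) ^ (-(2*(n:ℝ)-1)))
        ∂μH[2*(n:ℝ)-1]) ^ q ≤
        ((∫⁻ ξ in F, (‖f ξ‖₊ : ℝ≥0∞) ^ r * ENNReal.ofReal (dist ξ z) ^ (-β₁)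
          ∂μH[2*(n:ℝ)-1]) ^ (1/q) * (X ^ (1/s) * C₃ ^ (1/r'))) ^ q :=
          ENNReal.rpow_le_rpow hinner hq0.le
    _ = _ := by
        rw [ENNReal.mul_rpow_of_nonneg _ _ hq0.le, ENNReal.mul_rpow_of_nonneg _ _ hq0.le,
          ← ENNReal.rpow_mul, ← ENNReal.rpow_mul, ← ENNReal.rpow_mul]
        rw [one_div_mul_cancel hq0.ne', ENNReal.rpow_one]
        congr 3
        · field_simp
        · field_simp
  -- integrate over Ω and apply Tonelli
  haveI : IsFiniteMeasure (μH[2*(n:ℝ)-1].restrict F) := by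
    constructor
    rw [Measure.restrict_apply_univ]
    exact hMfin.lt_top
  have hGm : Measurable (Function.uncurry fun z ξ : Cn n =>
      (‖f ξ‖₊ : ℝ≥0∞) ^ r * ENNReal.ofReal (dist ξ z) ^ (-β₁)) := by
    apply Measurable.mul
    · exact ((hfm.comp measurable_snd).pow_const r)
    · exact ((continuous_snd.dist continuous_fst).measurable.ennreal_ofReal.pow_const _)
  have hswap := lintegral_lintegral_swap (μ := volume.restrict Ω)
    (ν := μH[2*(n:ℝ)-1].restrict F)
    (f := fun z ξ : Cn n => (‖f ξ‖₊ : ℝ≥0∞) ^ r * ENNReal.ofReal (dist ξ z) ^ (-β₁))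
    hGm.aemeasurable
  have hTon : ∫⁻ z in Ω, (∫⁻ ξ in F, (‖f ξ‖₊ : ℝ≥0∞) ^ r *
      ENNReal.ofReal (dist ξ z) ^ (-β₁) ∂μH[2*(n:ℝ)-1]) ∂volume ≤ C₂ * X := by
    rw [hswap]
    calc ∫⁻ ξ in F, (∫⁻ z in Ω, (‖f ξ‖₊ : ℝ≥0∞) ^ r *
        ENNReal.ofReal (dist ξ z) ^ (-β₁) ∂volume) ∂μH[2*(n:ℝ)-1]
        ≤ ∫⁻ ξ in F, (‖f ξ‖₊ : ℝ≥0∞) ^ r * C₂ ∂μH[2*(n:ℝ)-1] := by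
          apply setLIntegral_mono' hFmeas
          intro ξ hξ
          rw [lintegral_const_mul' _ _ (ENNReal.rpow_ne_top_of_nonneg hr0.le
            ENNReal.coe_ne_top)]
          apply mul_le_mul_right
          have hξΩ : ξ ∉ Ω := by
            rw [hFdef, hΩo.frontier_eq] at hξ
            exact hξ.2
          calc ∫⁻ z in Ω, ENNReal.ofReal (dist ξ z) ^ (-β₁) ∂volume
              = ∫⁻ z in Ω, ENNReal.ofReal (dist z ξ) ^ (-β₁) ∂volume :=
                lintegral_congr fun z => by rw [dist_comm]
          _ ≤ C₂ := hInt ξ hξΩ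
    _ = C₂ * X := by
        rw [lintegral_mul_const' _ _ hC₂]
        rw [mul_comm]
  -- final computation
  calc ∫⁻ z in Ω, (∫⁻ ξ in F,
      ((‖f ξ‖₊ : ℝ≥0∞) * ENNReal.ofReal (dist ξ z) ^ (-(2*(n:ℝ)-1))) ∂μH[2*(n:ℝ)-1]) ^ q
      ∂volume
      ≤ ∫⁻ z in Ω, (∫⁻ ξ in F, (‖f ξ‖₊ : ℝ≥0∞) ^ r *
          ENNReal.ofReal (dist ξ z) ^ (-β₁) ∂μH[2*(n:ℝ)-1]) * (X ^ (q/s) * C₃ ^ (q/r'))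
        ∂volume := setLIntegral_mono' hΩmeas step1
  _ = (X ^ (q/s) * C₃ ^ (q/r')) * ∫⁻ z in Ω, (∫⁻ ξ in F, (‖f ξ‖₊ : ℝ≥0∞) ^ r *
        ENNReal.ofReal (dist ξ z) ^ (-β₁) ∂μH[2*(n:ℝ)-1]) ∂volume := by
      rw [lintegral_mul_const' _ _ (ENNReal.mul_ne_top
        (ENNReal.rpow_ne_top_of_nonneg (by positivity) hXfin)
        (ENNReal.rpow_ne_top_of_nonneg (by positivity) hC₃))]
      rw [mul_comm]
  _ ≤ (X ^ (q/s) * C₃ ^ (q/r')) * (C₂ * X) := by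
      exact mul_le_mul_right hTon _
  _ = (C₃ ^ (q/r') * C₂) * (X ^ (q/s) * X) := by ring
  _ = (C₃ ^ (q/r') * C₂) * X ^ (q/r) := by
      congr 1
      rw [show X ^ (q/s) * X = X ^ (q/s) * X ^ (1:ℝ) by rw [ENNReal.rpow_one]]
      rw [← ENNReal.rpow_add_of_nonneg _ _ (by positivity) zero_le_one]
      congr 1
      rw [hsdef]
      field_simp
      ring
  _ ≤ max 1 (C₃ ^ (q/r') * C₂) * X ^ (q/r) :=
      mul_le_mul_left (le_max_right _ _) _

lemma measurable_piecewise_of_continuousOn {α β : Type*} [TopologicalSpace α]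
    [MeasurableSpace α] [OpensMeasurableSpace α] [TopologicalSpace β] [MeasurableSpace β]
    [BorelSpace β] {f : α → β} {s : Set α} [∀ j, Decidable (j ∈ s)]
    (hs : IsClosed s) (hf : ContinuousOn f s)
    (b : β) : Measurable (s.piecewise f (fun _ => b)) := by
  classical
  apply measurable_of_isOpen
  intro U hU
  rw [Set.piecewise_preimage]
  obtain ⟨V, hV, hVeq⟩ := continuousOn_iff'.1 hf U hU
  have h1 : s.ite (f ⁻¹' U) ((fun _ => b) ⁻¹' U) =
      (V ∩ s) ∪ ((fun _ : α => b) ⁻¹' U \ s) := by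
    rw [Set.ite, ← hVeq]
  rw [h1]
  refine MeasurableSet.union (hV.measurableSet.inter hs.measurableSet) ?_
  exact (measurable_const (a := b) hU.measurableSet).diff hs.measurableSet

lemma kernel_norm_bound {n : ℕ} (hn : 0 < n) (w : Cn n) (cf : ℂ) :
    (‖(starRingEnd ℂ) (w ⟨0, hn⟩) * cf / ((‖w‖ : ℂ) ^ (2 * n))‖₊ : ℝ≥0∞) ≤
      (‖cf‖₊ : ℝ≥0∞) * ENNReal.ofReal ‖w‖ ^ (-(2*(n:ℝ)-1)) := by
  by_cases hw : w = 0
  · simp [hw]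
  · have ht : 0 < ‖w‖ := norm_pos_iff.2 hw
    rw [← enorm_eq_nnnorm, ← enorm_eq_nnnorm, ← ofReal_norm, ← ofReal_norm,
      ENNReal.ofReal_rpow_of_pos ht, ← ENNReal.ofReal_mul (norm_nonneg _)]
    apply ENNReal.ofReal_le_ofReal
    rw [norm_div, norm_mul, RCLike.norm_conj, norm_pow, Complex.norm_real,
      Real.norm_eq_abs, abs_of_nonneg (norm_nonneg w)]
    have hcoord : ‖w ⟨0, hn⟩‖ ≤ ‖w‖ := coord_le w ⟨0, hn⟩
    have hrpow : ‖w‖ ^ (-(2*(n:ℝ)-1)) = (‖w‖ ^ (2*n - 1 : ℕ))⁻¹ := by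
      rw [show -(2*(n:ℝ)-1) = -(((2*n - 1 : ℕ) : ℝ)) by
        push_cast [Nat.cast_sub (by omega : 1 ≤ 2*n)]
        ring]
      rw [Real.rpow_neg (norm_nonneg w), Real.rpow_natCast]
    rw [hrpow, div_le_iff₀ (by positivity)]
    have hpow : (‖w‖ ^ (2*n-1:ℕ))⁻¹ * ‖w‖^(2*n) = ‖w‖ := by
      have h2n : 2*n = (2*n-1) + 1 := by omega
      rw [h2n, pow_succ]
      field_simp
      rw [Nat.add_sub_cancel]
    calc ‖w ⟨0,hn⟩‖ * ‖cf‖ ≤ ‖w‖ * ‖cf‖ :=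
          mul_le_mul_of_nonneg_right hcoord (norm_nonneg _)
    _ = ‖cf‖ * ((‖w‖^(2*n-1:ℕ))⁻¹ * ‖w‖^(2*n)) := by rw [hpow]; ring
    _ = ‖cf‖ * (‖w‖^(2*n-1:ℕ))⁻¹ * ‖w‖^(2*n) := by ring

/-- Lemma A.2 (ii): for a bounded domain `Ω ⊆ ℂⁿ` with `C¹` boundary and
`1 ≤ q < ∞`, `1 < r < ∞` with `q(2n−1) < 2nr`, there is `δ = δ(Ω,n,q,r) > 0` with
`δ ‖B_{∂Ω} f‖_{L^q(Ω)} ≤ ‖f‖_{L^r(∂Ω)}` for all `f ∈ C⁰(Ω̄)`. -/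
theorem stmt17 (n : ℕ) (hn : 0 < n) (Ω : Set (Cn n))
    (hΩo : IsOpen Ω) (hΩconn : IsConnected Ω) (hΩb : Bornology.IsBounded Ω)
    (hΩbd : HasC1Boundary Ω) (q r : ℝ) (hq : 1 ≤ q) (hr : 1 < r)
    (hqr : q * (2 * n - 1) < 2 * n * r) :
    ∃ δ : ℝ, 0 < δ ∧ ∀ f : Cn n → ℂ, ContinuousOn f (closure Ω) →
      ENNReal.ofReal δ *
          eLpNorm (fun z => ∫ ξ in frontier Ω, (starRingEnd ℂ) ((ξ - z) ⟨0, hn⟩) * f ξ /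
              ((‖ξ - z‖ : ℂ) ^ (2 * n)) ∂(μH[2 * (n : ℝ) - 1]))
            (ENNReal.ofReal q) (volume.restrict Ω) ≤
        eLpNorm f (ENNReal.ofReal r) (μH[2 * (n : ℝ) - 1].restrict (frontier Ω)) := by
  classical
  have hn1 : (1:ℝ) ≤ (n:ℝ) := by exact_mod_cast hn
  have hd0 : (0:ℝ) < 2*(n:ℝ)-1 := by linarith
  have hq0 : (0:ℝ) < q := by linarith
  have hr0 : (0:ℝ) < r := by linarith
  set F := frontier Ω with hFdef
  have hFmeas : MeasurableSet F := isClosed_frontier.measurableSet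
  have hΩmeas : MeasurableSet Ω := hΩo.measurableSet
  obtain ⟨A, t₀, hA, ht₀, hMfin, hAh⟩ := global_ahlfors hn hΩb hΩbd
  haveI : IsFiniteMeasure (μH[2*(n:ℝ)-1].restrict F) := by
    constructor
    rw [Measure.restrict_apply_univ]
    exact hMfin.lt_top
  have hvolΩ : volume Ω ≠ ⊤ := by
    refine ((measure_mono subset_closure).trans_lt ?_).ne
    exact (Metric.isCompact_of_isClosed_isBounded isClosed_closure hΩb.closure).measure_lt_top
  -- choice of the auxiliary exponent Q
  set Q : ℝ := max q ((r + 2*(n:ℝ)*r/(2*(n:ℝ)-1))/2) with hQdef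
  have hrQ : r < Q := by
    have h1 : r < 2*(n:ℝ)*r/(2*(n:ℝ)-1) := by
      rw [lt_div_iff₀ hd0]
      nlinarith
    have h2 : r < (r + 2*(n:ℝ)*r/(2*(n:ℝ)-1))/2 := by linarith
    exact lt_max_of_lt_right h2
  have hqQ : q ≤ Q := le_max_left _ _
  have hQ0 : (0:ℝ) < Q := by linarith
  have hQd : Q * (2*(n:ℝ)-1) < 2*(n:ℝ)*r := by
    rcases max_cases q ((r + 2*(n:ℝ)*r/(2*(n:ℝ)-1))/2) with ⟨h,-⟩|⟨h,-⟩ <;>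
      rw [hQdef, h]
    · exact hqr
    · have h2 : 2*(n:ℝ)*r/(2*(n:ℝ)-1) * (2*(n:ℝ)-1) = 2*(n:ℝ)*r := by field_simp
      nlinarith [h2]
  obtain ⟨C, hC, hC1, hbound⟩ := main_estimate hn hΩo hΩb hΩbd hr hrQ hQd
  set Cq : ℝ≥0∞ := (C ^ (q/Q) * (volume Ω) ^ (1 - q/Q)) ^ (1/q) with hCqdef
  have hCq : Cq ≠ ⊤ := by
    rw [hCqdef]
    refine ENNReal.rpow_ne_top_of_nonneg (by positivity) ?_
    refine ENNReal.mul_ne_top (ENNReal.rpow_ne_top_of_nonneg (by positivity) hC) ?_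
    refine ENNReal.rpow_ne_top_of_nonneg ?_ hvolΩ
    rw [sub_nonneg, div_le_one hQ0]
    exact hqQ
  refine ⟨(Cq.toReal + 1)⁻¹, by positivity, ?_⟩
  intro f hf
  set fm : Cn n → ℂ := (closure Ω).piecewise f (fun _ => 0) with hfmdef
  have hfm_meas : Measurable fm :=
    measurable_piecewise_of_continuousOn isClosed_closure hf 0
  have hfm_eq : ∀ x ∈ closure Ω, fm x = f x := fun x hx =>
    Set.piecewise_eq_of_mem _ _ _ hx
  have hFsub : F ⊆ closure Ω := frontier_subset_closure
  set T : Cn n → ℝ≥0∞ := fun z => ∫⁻ ξ in F,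
    (‖fm ξ‖₊ : ℝ≥0∞) * ENNReal.ofReal (dist ξ z) ^ (-(2*(n:ℝ)-1)) ∂μH[2*(n:ℝ)-1]
    with hTdef
  have hTmeas : Measurable T := by
    apply Measurable.lintegral_prod_right
    exact ((hfm_meas.nnnorm.coe_nnreal_ennreal.comp measurable_snd)).mul
      ((continuous_snd.dist continuous_fst).measurable.ennreal_ofReal.pow_const _)
  have step0 : ∀ z : Cn n,
      (‖∫ ξ in F, (starRingEnd ℂ) ((ξ - z) ⟨0, hn⟩) * f ξ /
        ((‖ξ - z‖ : ℂ) ^ (2 * n)) ∂μH[2*(n:ℝ)-1]‖₊ : ℝ≥0∞) ≤ T z := by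
    intro z
    refine (enorm_integral_le_lintegral_enorm _).trans ?_
    refine setLIntegral_mono' hFmeas ?_
    intro ξ hξ
    rw [hfm_eq ξ (hFsub hξ), dist_eq_norm]
    exact kernel_norm_bound hn (ξ - z) (f ξ)
  set X : ℝ≥0∞ := ∫⁻ ξ in F, (‖fm ξ‖₊ : ℝ≥0∞) ^ r ∂μH[2*(n:ℝ)-1] with hXdef
  have hmain : ∫⁻ z in Ω, T z ^ Q ∂volume ≤ C * X ^ (Q/r) := hbound fm hfm_meas
  -- Hölder between exponents q and Q
  have hLq : ∫⁻ z in Ω, T z ^ q ∂volume ≤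
      (C * X ^ (Q/r)) ^ (q/Q) * (volume Ω) ^ (1 - q/Q) := by
    rcases eq_or_lt_of_le hqQ with hEq | hLt
    · rw [← hEq] at hmain ⊢
      rw [div_self hq0.ne', sub_self, ENNReal.rpow_one, ENNReal.rpow_zero, mul_one]
      exact hmain
    · have hp1 : 1 < Q/q := (one_lt_div hq0).2 hLt
      have hpne : Q/q - 1 ≠ 0 := by intro h; nlinarith [h]
      have conj : (Q/q).HolderConjugate ((Q/q)/((Q/q)-1)) := by
        refine Real.holderConjugate_iff.2 ⟨hp1, ?_⟩
        field_simp
        ring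
      have hH := ENNReal.lintegral_mul_le_Lp_mul_Lq (volume.restrict Ω) conj
        ((hTmeas.pow_const q).aemeasurable) aemeasurable_const
        (f := fun z => T z ^ q) (g := fun _ => 1)
      simp only [Pi.mul_apply, mul_one, ENNReal.one_rpow] at hH
      rw [lintegral_one, Measure.restrict_apply_univ] at hH
      have h1 : ∀ z, (T z ^ q) ^ (Q/q) = T z ^ Q := by
        intro z
        rw [← ENNReal.rpow_mul]
        congr 1
        field_simp
      rw [lintegral_congr h1] at hH
      have h2 : (1:ℝ)/((Q/q)/((Q/q)-1)) = 1 - q/Q := by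
        field_simp
        try ring
      have h3 : (1:ℝ)/(Q/q) = q/Q := one_div_div _ _
      rw [h2, h3] at hH
      calc ∫⁻ z in Ω, T z ^ q ∂volume
          ≤ (∫⁻ z in Ω, T z ^ Q ∂volume) ^ (q/Q) * (volume Ω) ^ (1 - q/Q) := hH
      _ ≤ (C * X ^ (Q/r)) ^ (q/Q) * (volume Ω) ^ (1 - q/Q) := by
          exact mul_le_mul_left (ENNReal.rpow_le_rpow hmain (by positivity)) _
  -- rewrite the eLpNorms
  have hofq : (ENNReal.ofReal q) ≠ 0 := by
    simp only [ne_eq, ENNReal.ofReal_eq_zero, not_le]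
    linarith
  have hofr : (ENNReal.ofReal r) ≠ 0 := by
    simp only [ne_eq, ENNReal.ofReal_eq_zero, not_le]
    linarith
  rw [eLpNorm_eq_lintegral_rpow_enorm_toReal hofq ENNReal.ofReal_ne_top,
    eLpNorm_eq_lintegral_rpow_enorm_toReal hofr ENNReal.ofReal_ne_top,
    ENNReal.toReal_ofReal hq0.le, ENNReal.toReal_ofReal hr0.le]
  have hXf : (∫⁻ ξ, (‖f ξ‖₊ : ℝ≥0∞) ^ r ∂(μH[2*(n:ℝ)-1].restrict F)) = X := by
    rw [hXdef]
    refine setLIntegral_congr_fun hFmeas ?_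
    intro ξ hξ
    simp only [hfm_eq ξ (hFsub hξ)]
  have hchain : (∫⁻ z, (‖∫ ξ in F, (starRingEnd ℂ) ((ξ - z) ⟨0, hn⟩) * f ξ /
      ((‖ξ - z‖ : ℂ) ^ (2 * n)) ∂μH[2*(n:ℝ)-1]‖₊ : ℝ≥0∞) ^ q
        ∂(volume.restrict Ω)) ^ (1/q) ≤ Cq * X ^ (1/r) := by
    have h1 : (∫⁻ z, (‖∫ ξ in F, (starRingEnd ℂ) ((ξ - z) ⟨0, hn⟩) * f ξ /
        ((‖ξ - z‖ : ℂ) ^ (2 * n)) ∂μH[2*(n:ℝ)-1]‖₊ : ℝ≥0∞) ^ q ∂(volume.restrict Ω))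
        ≤ ∫⁻ z in Ω, T z ^ q ∂volume :=
      lintegral_mono fun z => ENNReal.rpow_le_rpow (step0 z) hq0.le
    calc (∫⁻ z, (‖∫ ξ in F, (starRingEnd ℂ) ((ξ - z) ⟨0, hn⟩) * f ξ /
        ((‖ξ - z‖ : ℂ) ^ (2 * n)) ∂μH[2*(n:ℝ)-1]‖₊ : ℝ≥0∞) ^ q
          ∂(volume.restrict Ω)) ^ (1/q)
        ≤ ((C * X ^ (Q/r)) ^ (q/Q) * (volume Ω) ^ (1 - q/Q)) ^ (1/q) :=
          ENNReal.rpow_le_rpow (h1.trans hLq) (by positivity)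
    _ = Cq * X ^ (1/r) := by
        have e1 : ((C * X ^ (Q/r)) ^ (q/Q) * (volume Ω) ^ (1 - q/Q)) ^ (1/q)
            = (C ^ (q/Q) * (volume Ω) ^ (1 - q/Q)) ^ (1/q) * X ^ (1/r) := by
          rw [ENNReal.mul_rpow_of_nonneg C _ (by positivity : (0:ℝ) ≤ q/Q)]
          rw [← ENNReal.rpow_mul X (Q/r) (q/Q),
            show (Q/r)*(q/Q) = q/r from by field_simp]
          rw [show C ^ (q/Q) * X ^ (q/r) * (volume Ω) ^ (1-q/Q) =
            (C ^ (q/Q) * (volume Ω) ^ (1-q/Q)) * X ^ (q/r) from by ring]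
          rw [ENNReal.mul_rpow_of_nonneg _ _ (by positivity : (0:ℝ) ≤ 1/q)]
          rw [← ENNReal.rpow_mul X (q/r) (1/q), show (q/r)*(1/q) = 1/r from by field_simp]
        rw [hCqdef]
        exact e1
  simp only [enorm_eq_nnnorm]
  rw [hXf]
  calc ENNReal.ofReal (Cq.toReal + 1)⁻¹ *
      (∫⁻ z, (‖∫ ξ in F, (starRingEnd ℂ) ((ξ - z) ⟨0, hn⟩) * f ξ /
        ((‖ξ - z‖ : ℂ) ^ (2 * n)) ∂μH[2*(n:ℝ)-1]‖₊ : ℝ≥0∞) ^ q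
          ∂(volume.restrict Ω)) ^ (1/q)
      ≤ ENNReal.ofReal (Cq.toReal + 1)⁻¹ * (Cq * X ^ (1/r)) :=
        mul_le_mul_right hchain _
  _ = (ENNReal.ofReal (Cq.toReal + 1)⁻¹ * Cq) * X ^ (1/r) := by ring
  _ ≤ 1 * X ^ (1/r) := by
      refine mul_le_mul_left ?_ _
      have h0 : Cq = ENNReal.ofReal Cq.toReal := (ENNReal.ofReal_toReal hCq).symm
      calc ENNReal.ofReal (Cq.toReal + 1)⁻¹ * Cq
          = ENNReal.ofReal (Cq.toReal + 1)⁻¹ * ENNReal.ofReal Cq.toReal := by rw [← h0]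
      _ = ENNReal.ofReal ((Cq.toReal + 1)⁻¹ * Cq.toReal) :=
          (ENNReal.ofReal_mul (by positivity)).symm
      _ ≤ 1 := by
          rw [show (1:ℝ≥0∞) = ENNReal.ofReal 1 by simp]
          apply ENNReal.ofReal_le_ofReal
          rw [inv_mul_le_iff₀ (by positivity)]
          nlinarith [ENNReal.toReal_nonneg (a := Cq)]
  _ = X ^ (1/r) := one_mul _

end StmtAux
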